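/- arXiv:2507.10068 — 2 statements merged into one kernel-verified Lean document; each statement's English description precedes it below -/
import Mathlib

section
/- Let d_m(W) denote the minimum distance of 𝒜(m,W). For W = {r₁,…,r₂} with 0 < r₁ ≤ r₂ < m, d_m(W) ≥ min{ D₂, 2·d_{m−1}(W₋₁,₋₁), max{ 3·d_{m−1}(W₋₁,₀), min{ 3·d_{m−1}(W), d_{m−1}(W₋₁,₋₁) + d_{m−1}(W₋₁,₀) } } }, where D₂ = d_{m−1}({r₁,…,r₂−1}) if r₁ < r₂ and D₂ = +∞ if r₁ = r₂, W₋₁,₋₁ = {r₁−1,…,r₂−1}, and W₋₁,₀ = {r₁−1,…,r₂}. -/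
open Finset

abbrev F2 := ZMod 2
abbrev F4 := GaloisField 2 2

def A3 : Matrix (ZMod 3) (ZMod 3) F2 := !![1,1,1; 1,1,0; 1,0,1]

/-- The `m`-fold Kronecker power of `A3`, with rows and columns indexed by `Fin m → ZMod 3`. -/
def A3pow (m : ℕ) : Matrix (Fin m → ZMod 3) (Fin m → ZMod 3) F2 :=
  fun r c => ∏ i, A3 (r i) (c i)

/-- The DFT coefficient at frequency `j` as an `F2`-linear functional. -/
noncomputable def dftL (m : ℕ) (α : F4) (j : Fin m → ZMod 3) :
    ((Fin m → ZMod 3) → F2) →ₗ[F2] F4 :=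
  ∑ i : Fin m → ZMod 3,
    α ^ (∑ l, i l * j l).val • ((Algebra.linearMap F2 F4).comp (LinearMap.proj i))

/-- The abelian code with frequency weight set `W`. -/
noncomputable def abelianCode (m : ℕ) (α : F4) (W : Finset ℕ) :
    Submodule F2 ((Fin m → ZMod 3) → F2) :=
  ⨅ j ∈ {j : Fin m → ZMod 3 | hammingNorm j ∉ W}, LinearMap.ker (dftL m α j)

/-- The BiD code as the span of the rows of `A3pow m` with weight in the prescribed range. -/
noncomputable def BiD (m r₁ r₂ : ℕ) : Submodule F2 ((Fin m → ZMod 3) → F2) :=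
  Submodule.span F2 {a | ∃ r, (2^r₂ * 3^(m-r₂) ≤ hammingNorm (A3pow m r) ∧
    hammingNorm (A3pow m r) ≤ 2^r₁ * 3^(m-r₁)) ∧ a = A3pow m r}

/-- Minimum distance of a linear code. -/
noncomputable def minDist {m : ℕ} (C : Submodule F2 ((Fin m → ZMod 3) → F2)) : ℕ :=
  sInf {d : ℕ | ∃ a ∈ C, a ≠ 0 ∧ hammingNorm a = d}

/-!
Write a word `c` of `𝒜(m+1,W)` as three layers `c₀, c₁, c₂ ∈ F₂^{3^m}` according to the first
coordinate. The DFT of `c` at `(k, j)` is `∑ₜ αᵗᵏ ĉₜ(j)`, a 3-point DFT of the layers, which is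
invertible because `1 + α + α² = 0`. Its vanishing at frequencies of weight `wt j` (`k = 0`) and
`wt j + 1` (`k ≠ 0`) gives `c₀ + c₁ + c₂ ∈ 𝒜(W)`, `cₜ + cᵤ ∈ 𝒜(W₋₁,₋₁)` and `cₜ ∈ 𝒜(W₋₁,₀)`.
A single nonzero layer then lies in `𝒜(W) ∩ 𝒜(W₋₁,₋₁) = 𝒜({r₁,…,r₂-1})`; two nonzero layers
lie in `𝒜(W₋₁,₋₁)`; three nonzero layers are either all equal, hence in `𝒜(W)`, or two of them
add up to a nonzero word of `𝒜(W₋₁,₋₁)`. If `𝒜(m+1,W) = 0`, its minimum distance is `0` by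
convention, and `b ↦ (b, b, 0)` shows that `𝒜(m,W₋₁,₋₁) = 0` as well.
-/

theorem hammingNorm_add_le {ι : Type*} [Fintype ι] {β : ι → Type*} [∀ i, AddZeroClass (β i)]
    [∀ i, DecidableEq (β i)] (x y : ∀ i, β i) :
    hammingNorm (x + y) ≤ hammingNorm x + hammingNorm y := by
  classical
  refine (card_le_card fun i hi => ?_).trans (card_union_le _ _)
  simp only [mem_filter, mem_union, mem_univ, true_and, Pi.add_apply] at hi ⊢
  by_contra! h
  simp [h.1, h.2] at hi

theorem hammingNorm_cons {n : ℕ} {β : Type*} [Zero β] [DecidableEq β] (k : β) (x : Fin n → β) :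
    hammingNorm (Fin.cons k x : Fin (n + 1) → β) = hammingNorm x + if k = 0 then 0 else 1 := by
  simp only [hammingNorm, card_filter, Fin.sum_univ_succ, Fin.cons_zero, Fin.cons_succ]
  by_cases hk : k = 0 <;> simp [hk, add_comm]

theorem Fintype.sum_fin_succ_pi {n : ℕ} {β M : Type*} [Fintype β] [AddCommMonoid M]
    (f : (Fin (n + 1) → β) → M) : ∑ i, f i = ∑ t, ∑ x : Fin n → β, f (Fin.cons t x) := by
  rw [← (Fin.consEquiv fun _ => β).sum_comp f, Fintype.sum_prod_type]
  rfl

theorem ZMod.sum_univ_three {M : Type*} [AddCommMonoid M] (f : ZMod 3 → M) :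
    ∑ t, f t = f 0 + f 1 + f 2 :=
  Fin.sum_univ_three f

theorem ZMod.forall_three {p : ZMod 3 → Prop} : (∀ t, p t) ↔ p 0 ∧ p 1 ∧ p 2 := by
  refine ⟨fun h => ⟨h 0, h 1, h 2⟩, fun ⟨h0, h1, h2⟩ t => ?_⟩
  obtain rfl | rfl | rfl : t = 0 ∨ t = 1 ∨ t = 2 := by revert t; decide
  exacts [h0, h1, h2]

section Layer

variable {n : ℕ} {β γ : Type*}

def layer (c : (Fin (n + 1) → β) → γ) (t : β) : (Fin n → β) → γ :=
  fun x => c (Fin.cons t x)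

theorem hammingNorm_eq_sum_layer [Fintype β] [Zero γ] [DecidableEq γ]
    (c : (Fin (n + 1) → β) → γ) : hammingNorm c = ∑ t, hammingNorm (layer c t) := by
  simp only [hammingNorm, card_filter]
  exact Fintype.sum_fin_succ_pi _

theorem eq_zero_of_layer_eq_zero [Zero γ] {c : (Fin (n + 1) → β) → γ}
    (h : ∀ t, layer c t = 0) : c = 0 := by
  funext i
  simpa [layer] using congrFun (h (i 0)) (Fin.tail i)

end Layer

theorem dftL_apply (m : ℕ) (α : F4) (j : Fin m → ZMod 3) (a : (Fin m → ZMod 3) → F2) :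
    dftL m α j a = ∑ i, α ^ (∑ l, i l * j l).val * algebraMap F2 F4 (a i) := by
  simp [dftL, Algebra.smul_def]

theorem mem_abelianCode_iff {m : ℕ} {α : F4} {W : Finset ℕ} {a : (Fin m → ZMod 3) → F2} :
    a ∈ abelianCode m α W ↔ ∀ j, hammingNorm j ∉ W → dftL m α j a = 0 := by
  simp [abelianCode, Submodule.mem_iInf]

theorem abelianCode_inf (m : ℕ) (α : F4) (W W' : Finset ℕ) :
    abelianCode m α W ⊓ abelianCode m α W' = abelianCode m α (W ∩ W') := by
  ext a
  simp only [Submodule.mem_inf, mem_abelianCode_iff, mem_inter, not_and_or]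
  exact ⟨fun h j hj => hj.elim (h.1 j) (h.2 j),
    fun h => ⟨fun j hj => h j (.inl hj), fun j hj => h j (.inr hj)⟩⟩

section CubeRoot

variable {α : F4}

theorem pow_val_add_of_pow_three (hα : α ^ 3 = 1) (a b : ZMod 3) :
    α ^ (a + b).val = α ^ a.val * α ^ b.val := by
  rw [ZMod.val_add, ← pow_eq_pow_mod _ hα, pow_add]

theorem one_add_add_sq_of_orderOf (hα : orderOf α = 3) : 1 + α + α ^ 2 = 0 := by
  have h3 : α ^ 3 = 1 := hα ▸ pow_orderOf_eq_one α
  have h1 : α ≠ 1 := by rintro rfl; simp at hα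
  have : (α - 1) * (1 + α + α ^ 2) = 0 := by linear_combination h3
  simpa [sub_eq_zero, h1] using this

theorem eq_of_sum_pow_mul_eq_zero (hα : orderOf α = 3) {x : ZMod 3 → F4}
    (h : ∀ k ≠ 0, ∑ t, α ^ (t * k).val * x t = 0) (t u : ZMod 3) : x t = x u := by
  have hs := one_add_add_sq_of_orderOf hα
  have h2 : (2 : F4) = 0 := CharTwo.two_eq_zero
  have E1 : x 0 + α * x 1 + α ^ 2 * x 2 = 0 := by
    simpa [ZMod.sum_univ_three, ZMod.val_mul, ZMod.val_ofNat,
      ZMod.val_one_eq_one_mod] using h 1 (by decide)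
  have E2 : x 0 + α ^ 2 * x 1 + α * x 2 = 0 := by
    simpa [ZMod.sum_univ_three, ZMod.val_mul, ZMod.val_ofNat,
      ZMod.val_one_eq_one_mod] using h 2 (by decide)
  have e12 : x 1 = x 2 := by linear_combination E1 + E2 - (x 1 + x 2) * hs + (x 1 - x 0) * h2
  have e01 : x 0 = x 1 := by linear_combination E1 + α ^ 2 * e12 - x 1 * hs
  have hx : ∀ s, x s = x 0 := ZMod.forall_three.2 ⟨rfl, e01.symm, (e01.trans e12).symm⟩
  rw [hx t, hx u]

theorem eq_zero_of_sum_pow_mul_eq_zero (hα : orderOf α = 3) {x : ZMod 3 → F4}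
    (h : ∀ k, ∑ t, α ^ (t * k).val * x t = 0) (t : ZMod 3) : x t = 0 := by
  have hx := eq_of_sum_pow_mul_eq_zero hα fun k _ => h k
  have h0 := h 0
  simp only [mul_zero, ZMod.val_zero, pow_zero, one_mul, ZMod.sum_univ_three, hx 1 0,
    hx 2 0] at h0
  rw [hx t 0]
  linear_combination h0 - x 0 * (CharTwo.two_eq_zero : (2 : F4) = 0)

theorem dftL_cons (hα : α ^ 3 = 1) {n : ℕ} (k : ZMod 3) (j : Fin n → ZMod 3)
    (c : (Fin (n + 1) → ZMod 3) → F2) :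
    dftL (n + 1) α (Fin.cons k j) c = ∑ t, α ^ (t * k).val * dftL n α j (layer c t) := by
  simp only [dftL_apply, Fintype.sum_fin_succ_pi, Finset.mul_sum, Fin.sum_univ_succ, Fin.cons_zero,
    Fin.cons_succ, pow_val_add_of_pow_three hα, mul_assoc, layer]

end CubeRoot

section LayerCodes

variable {n : ℕ} {α : F4} {W W' : Finset ℕ} {c : (Fin (n + 1) → ZMod 3) → F2}

theorem sum_layer_mem (hα : α ^ 3 = 1) (hc : c ∈ abelianCode (n + 1) α W) :
    layer c 0 + layer c 1 + layer c 2 ∈ abelianCode n α W := by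
  rw [mem_abelianCode_iff] at hc ⊢
  intro j hj
  have := hc (Fin.cons 0 j) (by rwa [hammingNorm_cons, if_pos rfl, add_zero])
  simpa [dftL_cons hα, ZMod.sum_univ_three] using this

theorem layer_add_layer_mem (hα : orderOf α = 3) (hW : ∀ w, w + 1 ∈ W → w ∈ W')
    (hc : c ∈ abelianCode (n + 1) α W) (t u : ZMod 3) :
    layer c t + layer c u ∈ abelianCode n α W' := by
  rw [mem_abelianCode_iff] at hc ⊢
  intro j hj
  have hk : ∀ k ≠ 0, ∑ s, α ^ (s * k).val * dftL n α j (layer c s) = 0 := fun k hk => by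
    rw [← dftL_cons (hα ▸ pow_orderOf_eq_one α)]
    exact hc _ (by rw [hammingNorm_cons, if_neg hk]; exact fun h => hj (hW _ h))
  rw [map_add, eq_of_sum_pow_mul_eq_zero hα hk t u]
  exact CharTwo.add_self_eq_zero _

theorem layer_mem (hα : orderOf α = 3) (hW : ∀ w, w ∈ W ∨ w + 1 ∈ W → w ∈ W')
    (hc : c ∈ abelianCode (n + 1) α W) (t : ZMod 3) : layer c t ∈ abelianCode n α W' := by
  rw [mem_abelianCode_iff] at hc ⊢
  intro j hj
  refine eq_zero_of_sum_pow_mul_eq_zero hα (x := fun s => dftL n α j (layer c s)) (fun k => ?_) t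
  rw [← dftL_cons (hα ▸ pow_orderOf_eq_one α)]
  refine hc _ fun h => hj (hW _ ?_)
  rw [hammingNorm_cons] at h
  split_ifs at h
  exacts [.inl h, .inr h]

end LayerCodes

theorem abelianCode_empty {α : F4} (hα : orderOf α = 3) (m : ℕ) : abelianCode m α ∅ = ⊥ := by
  induction m with
  | zero =>
    refine eq_bot_iff.mpr fun a ha => ?_
    have := mem_abelianCode_iff.mp ha 0 (notMem_empty _)
    funext i
    simp only [dftL_apply, Fintype.sum_unique, Fin.sum_univ_zero, ZMod.val_zero, pow_zero,
      one_mul, map_eq_zero_iff _ (algebraMap F2 F4).injective] at this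
    exact (congrArg a (Subsingleton.elim _ _)).trans this
  | succ n ih =>
    refine eq_bot_iff.mpr fun c hc => eq_zero_of_layer_eq_zero fun t => ?_
    simpa [ih] using layer_mem hα (W' := ∅) (by simp) hc t

theorem abelianCode_eq_bot_of_succ {n : ℕ} {α : F4} (hα : α ^ 3 = 1) {W W' : Finset ℕ}
    (hW : ∀ w ∈ W', w + 1 ∈ W) (h : abelianCode (n + 1) α W = ⊥) : abelianCode n α W' = ⊥ := by
  refine eq_bot_iff.mpr fun b hb => ?_
  let c : (Fin (n + 1) → ZMod 3) → F2 := fun i => if i 0 = 2 then 0 else b (Fin.tail i)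
  have hlayer : ∀ t, layer c t = if t = 2 then 0 else b := fun t => by
    funext x
    by_cases ht : t = 2 <;> simp [c, layer, ht]
  have hc : c ∈ abelianCode (n + 1) α W := by
    rw [mem_abelianCode_iff] at hb ⊢
    intro j' hj'
    obtain ⟨k, j, rfl⟩ : ∃ k j, j' = Fin.cons k j :=
      ⟨j' 0, Fin.tail j', (Fin.cons_self_tail j').symm⟩
    rw [dftL_cons hα, ZMod.sum_univ_three, hlayer, hlayer, hlayer]
    by_cases hk : k = 0
    · simp +decide [hk, CharTwo.add_self_eq_zero]
    · rw [hammingNorm_cons, if_neg hk] at hj'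
      simp +decide [hb j fun hj => hj' (hW _ hj)]
  have hc0 : c = 0 := by simpa [h] using hc
  calc b = layer c 0 := by simp +decide [hlayer]
    _ = 0 := by rw [hc0]; rfl

section MinDist

variable {n : ℕ} {C : Submodule F2 ((Fin n → ZMod 3) → F2)}

theorem minDist_le_hammingNorm {a : (Fin n → ZMod 3) → F2} (ha : a ∈ C) (h0 : a ≠ 0) :
    minDist C ≤ hammingNorm a :=
  Nat.sInf_le ⟨a, ha, h0, rfl⟩

theorem minDist_bot : minDist (⊥ : Submodule F2 ((Fin n → ZMod 3) → F2)) = 0 := by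
  simp [minDist]

theorem exists_hammingNorm_eq_minDist (hC : C ≠ ⊥) :
    ∃ a ∈ C, a ≠ 0 ∧ hammingNorm a = minDist C := by
  obtain ⟨a, ha, h0⟩ := Submodule.exists_mem_ne_zero_of_ne_bot hC
  exact Nat.sInf_mem (s := {d | ∃ a ∈ C, a ≠ 0 ∧ hammingNorm a = d}) ⟨_, a, ha, h0, rfl⟩

end MinDist

section RecursiveBound

variable {n : ℕ} {S P E : Submodule F2 ((Fin n → ZMod 3) → F2)} {a b c : (Fin n → ZMod 3) → F2}

theorem min_le_hammingNorm_of_ne_zero (hS : a + b + c ∈ S) (hab : a + b ∈ P) (hbc : b + c ∈ P)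
    (ha : a ∈ E) (hc : c ∈ E) (ha0 : a ≠ 0) (hc0 : c ≠ 0) :
    min (3 * minDist S) (minDist P + minDist E) ≤
      hammingNorm a + hammingNorm b + hammingNorm c := by
  by_cases heq : a = b ∧ b = c
  · obtain ⟨rfl, rfl⟩ := heq
    have h3 : a + a + a = a := by rw [CharTwo.add_self_eq_zero, zero_add]
    have := minDist_le_hammingNorm (h3 ▸ hS) ha0
    omega
  refine min_le_of_right_le ?_
  rcases not_and_or.mp heq with hne | hne
  · have hP := minDist_le_hammingNorm hab (by rwa [Ne, CharTwo.add_eq_zero])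
    have hE := minDist_le_hammingNorm hc hc0
    have := hammingNorm_add_le a b
    omega
  · have hP := minDist_le_hammingNorm hbc (by rwa [Ne, CharTwo.add_eq_zero])
    have hE := minDist_le_hammingNorm ha ha0
    have := hammingNorm_add_le b c
    omega

/-- With `S = 𝒜(n,W)`, `P = 𝒜(n,W₋₁,₋₁)` and `E = 𝒜(n,W₋₁,₀)` this is the paper's bound. -/
noncomputable def recursiveBound (D₂ : ℕ∞) (S P E : Submodule F2 ((Fin n → ZMod 3) → F2)) : ℕ∞ :=
  min D₂ (min (2 * (minDist P : ℕ∞))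
    (max (3 * (minDist E : ℕ∞)) (min (3 * (minDist S : ℕ∞)) ((minDist P : ℕ∞) + minDist E))))

theorem recursiveBound_le_hammingNorm {D₂ : ℕ∞}
    (hD₂ : ∀ x ∈ S ⊓ P, x ≠ 0 → D₂ ≤ hammingNorm x) (hS : a + b + c ∈ S)
    (hab : a + b ∈ P) (hac : a + c ∈ P) (hbc : b + c ∈ P) (ha : a ∈ E) (hb : b ∈ E) (hc : c ∈ E)
    (hne : ¬(a = 0 ∧ b = 0 ∧ c = 0)) :
    recursiveBound D₂ S P E ≤ (hammingNorm a + hammingNorm b + hammingNorm c : ℕ) := by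
  have single {x} (hxS : x ∈ S) (hxP : x ∈ P) (hx0 : x ≠ 0) :
      recursiveBound D₂ S P E ≤ hammingNorm x :=
    min_le_of_left_le (hD₂ x ⟨hxS, hxP⟩ hx0)
  have pair {x y} (hx : x ∈ P) (hy : y ∈ P) (hx0 : x ≠ 0) (hy0 : y ≠ 0) :
      recursiveBound D₂ S P E ≤ (hammingNorm x + hammingNorm y : ℕ) := by
    refine min_le_of_right_le (min_le_of_left_le ?_)
    have := minDist_le_hammingNorm hx hx0
    have := minDist_le_hammingNorm hy hy0
    norm_cast
    omega
  rcases eq_or_ne a 0 with rfl | ha0 <;> rcases eq_or_ne b 0 with rfl | hb0 <;>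
    rcases eq_or_ne c 0 with rfl | hc0
  · simp at hne
  · simpa using single (by simpa using hS) (by simpa using hbc) hc0
  · simpa using single (by simpa using hS) (by simpa using hab) hb0
  · simpa using pair (by simpa using hab) (by simpa using hac) hb0 hc0
  · simpa using single (by simpa using hS) (by simpa using hab) ha0
  · simpa using pair (by simpa using hab) (by simpa using hbc) ha0 hc0
  · simpa using pair (by simpa using hac) (by simpa using hbc) ha0 hb0
  refine min_le_of_right_le (min_le_of_right_le (max_le ?_ ?_))
  · have := minDist_le_hammingNorm ha ha0
    have := minDist_le_hammingNorm hb hb0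
    have := minDist_le_hammingNorm hc hc0
    norm_cast
    omega
  · have h := min_le_hammingNorm_of_ne_zero hS hab hbc ha hc ha0 hc0
    rw [← Nat.cast_le (α := ℕ∞), Nat.mono_cast.map_min] at h
    exact_mod_cast h

end RecursiveBound

theorem ite_minDist_le_hammingNorm_of_mem_inf {n r₁ r₂ : ℕ} {α : F4} (hα : orderOf α = 3)
    (h0 : 0 < r₁) {x : (Fin n → ZMod 3) → F2}
    (hx : x ∈ abelianCode n α (Icc r₁ r₂) ⊓ abelianCode n α (Icc (r₁ - 1) (r₂ - 1)))
    (hx0 : x ≠ 0) :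
    (if r₁ < r₂ then (minDist (abelianCode n α (Icc r₁ (r₂ - 1))) : ℕ∞) else ⊤) ≤
      hammingNorm x := by
  have hinter : Icc r₁ r₂ ∩ Icc (r₁ - 1) (r₂ - 1) = Icc r₁ (r₂ - 1) := by
    ext w
    simp only [mem_inter, mem_Icc]
    omega
  rw [abelianCode_inf, hinter] at hx
  split_ifs with hlt
  · exact_mod_cast minDist_le_hammingNorm hx hx0
  · rw [Icc_eq_empty (by omega), abelianCode_empty hα] at hx
    exact absurd ((Submodule.mem_bot _).1 hx) hx0

/-- Recursive lower bound on the minimum distance of `𝒜(m,{r₁,…,r₂})` for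
`0 < r₁ ≤ r₂ < m` (with `D₂ = +∞` when `r₁ = r₂`). -/
theorem minDist_recursive_lower_bound (m r₁ r₂ : ℕ) (h0 : 0 < r₁) (h12 : r₁ ≤ r₂)
    (h2m : r₂ < m) (α : F4) (hα : orderOf α = 3) :
    (min (if r₁ < r₂ then (minDist (abelianCode (m-1) α (Finset.Icc r₁ (r₂-1))) : ℕ∞) else ⊤)
      (min (2 * (minDist (abelianCode (m-1) α (Finset.Icc (r₁-1) (r₂-1))) : ℕ∞))
        (max (3 * (minDist (abelianCode (m-1) α (Finset.Icc (r₁-1) r₂)) : ℕ∞))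
          (min (3 * (minDist (abelianCode (m-1) α (Finset.Icc r₁ r₂)) : ℕ∞))
            ((minDist (abelianCode (m-1) α (Finset.Icc (r₁-1) (r₂-1))) : ℕ∞)
              + (minDist (abelianCode (m-1) α (Finset.Icc (r₁-1) r₂)) : ℕ∞))))))
      ≤ (minDist (abelianCode m α (Finset.Icc r₁ r₂)) : ℕ∞) := by
  obtain ⟨n, rfl⟩ : ∃ n, m = n + 1 := ⟨m - 1, by omega⟩
  have hα3 : α ^ 3 = 1 := hα ▸ pow_orderOf_eq_one α
  have hshift (w : ℕ) : w + 1 ∈ Icc r₁ r₂ ↔ w ∈ Icc (r₁ - 1) (r₂ - 1) := by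
    simp only [mem_Icc]
    omega
  rw [Nat.add_sub_cancel]
  by_cases hC : abelianCode (n + 1) α (Icc r₁ r₂) = ⊥
  · rw [hC, abelianCode_eq_bot_of_succ hα3 (fun w => (hshift w).2) hC, minDist_bot, minDist_bot]
    simp
  obtain ⟨c, hc, hc0, hwt⟩ := exists_hammingNorm_eq_minDist hC
  rw [← hwt, hammingNorm_eq_sum_layer, ZMod.sum_univ_three]
  have hP (t u : ZMod 3) := layer_add_layer_mem hα (fun w => (hshift w).1) hc t u
  have hE (t : ZMod 3) := layer_mem hα (W' := Icc (r₁ - 1) r₂)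
    (fun w hw => by simp only [mem_Icc] at hw ⊢; omega) hc t
  exact recursiveBound_le_hammingNorm (fun _ => ite_minDist_le_hammingNorm_of_mem_inf hα h0)
    (sum_layer_mem hα3 hc) (hP 0 1) (hP 0 2) (hP 1 2) (hE 0) (hE 1) (hE 2)
    fun h => hc0 (eq_zero_of_layer_eq_zero (ZMod.forall_three.2 h))
end

section
/- Let G_{m,e} be the submatrix of A₃^{⊗m} consisting of rows with Hamming weight 2^w·3^{m−w} for even w, and G_{m,o} for odd w. Then the sum over F₂ of all rows of G_{m,e} has Hamming weight 2m+1, and the sum of all rows of G_{m,o} has Hamming weight 2m, for every m ≥ 1. -/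
open Finset

/-!
Row `r` of `A3pow m` is the product vector `c ↦ ∏ i, A3 (r i) (c i)`, so its weight is
`2 ^ wt r * 3 ^ (m - wt r)` and the rows with `w` even (odd) are those with `wt r` even (odd).
Over `F₂` the parity of `wt r` is `∑ i, [r i ≠ 0]`, so the sum of the odd rows at a column `c` is
`∑ i ∑_{r i ≠ 0} ∏ j, A3 (r j) (c j)`. Each inner sum factors into column sums of `A3`, which are
`[c j = 0]` over all rows and `[c j ≠ 0]` over the rows `≠ 0`; hence the odd rows sum to the
indicator of `wt c = 1`. All rows sum to the indicator of `c = 0`, so the even rows sum to the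
indicator of `wt c ≤ 1`. There are `2m` vectors of weight one.
-/

section Hamming

variable {ι α : Type*} [Fintype ι] [Zero α] [DecidableEq α]

theorem hammingNorm_indicator {β R : Type*} [Fintype β] [Zero R] [One R] [NeZero (1 : R)]
    [DecidableEq R] (p : β → Prop) [DecidablePred p] :
    hammingNorm (fun x => if p x then (1 : R) else 0) = #{x | p x} := by
  unfold hammingNorm
  congr 1
  ext x
  simp

theorem hammingNorm_fun_prod [DecidableEq ι] {κ : ι → Type*} [∀ i, Fintype (κ i)] {R : Type*}
    [CommMonoidWithZero R] [NoZeroDivisors R] [Nontrivial R] [DecidableEq R]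
    (v : ∀ i, κ i → R) :
    hammingNorm (fun c : ∀ i, κ i => ∏ i, v i (c i)) = ∏ i, hammingNorm (v i) := by
  have : ({c | ∏ i, v i (c i) ≠ 0} : Finset (∀ i, κ i)) =
      Fintype.piFinset fun i => {a | v i a ≠ 0} := by
    ext c
    simp [Finset.prod_eq_zero_iff]
  rw [hammingNorm, this, Fintype.card_piFinset]
  rfl

theorem card_filter_eq_zero_eq_card_sub_hammingNorm (r : ι → α) :
    #{i | r i = 0} = Fintype.card ι - hammingNorm r := by
  rw [← Finset.card_univ, ← Finset.card_filter_add_card_filter_not (s := Finset.univ)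
    (fun i => r i = 0)]
  exact (Nat.add_sub_cancel _ _).symm

theorem sum_boole_support_eq_singleton [DecidableEq ι] {R : Type*} [AddCommMonoidWithOne R]
    (c : ι → α) :
    ∑ i, (if ∀ j, c j ≠ 0 ↔ j = i then 1 else 0 : R) = if hammingNorm c = 1 then 1 else 0 := by
  have hsupport (i : ι) : (∀ j, c j ≠ 0 ↔ j = i) ↔ ({j | c j ≠ 0} : Finset ι) = {i} := by
    simp [Finset.ext_iff]
  simp only [hsupport, hammingNorm, Finset.card_eq_one]
  split_ifs with h
  · obtain ⟨i, hi⟩ := h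
    simp [hi]
  · push Not at h
    simp [h]

theorem card_hammingNorm_eq_one [DecidableEq ι] [Fintype α] :
    #{c : ι → α | hammingNorm c = 1} = Fintype.card ι * (Fintype.card α - 1) := by
  let nonzero : Finset (ι × α) := univ ×ˢ univ.erase 0
  have himage : ({c | hammingNorm c = 1} : Finset (ι → α)) =
      nonzero.image fun p => Pi.single p.1 p.2 := by
    ext c
    simp only [hammingNorm, Finset.card_eq_one, Finset.ext_iff, mem_filter_univ, mem_image,
      nonzero, mem_product, mem_univ, mem_erase, true_and, and_true, Prod.exists, mem_singleton]
    constructor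
    · rintro ⟨i, hi⟩
      refine ⟨i, c i, (hi i).2 rfl, ?_⟩
      ext j
      by_cases hj : j = i
      · simp [hj]
      · simpa [hj, eq_comm] using (hi j).not.2 hj
    · rintro ⟨i, a, ha, rfl⟩
      exact ⟨i, fun j => by by_cases j = i <;> simp_all⟩
  have hinj : Set.InjOn (fun p : ι × α => (Pi.single p.1 p.2 : ι → α)) nonzero := by
    rintro ⟨i, a⟩ ha ⟨i', a'⟩ - h
    have := congrFun h i
    replace ha : a ≠ 0 := (mem_erase.1 (mem_product.1 (mem_coe.1 ha)).2).1
    by_cases hi : i = i' <;> simp_all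
  rw [himage, card_image_of_injOn hinj, card_product, card_univ, card_erase_of_mem (mem_univ _),
    card_univ]

theorem card_hammingNorm_le_one [DecidableEq ι] [Fintype α] :
    #{c : ι → α | hammingNorm c ≤ 1} = Fintype.card ι * (Fintype.card α - 1) + 1 := by
  have : ({c | hammingNorm c ≤ 1} : Finset (ι → α)) =
      insert 0 ({c | hammingNorm c = 1} : Finset (ι → α)) := by
    ext c
    simp [Nat.le_one_iff_eq_zero_or_eq_one, hammingNorm_eq_zero]
  rw [this, card_insert_of_notMem (by simp), card_hammingNorm_eq_one]

theorem sum_filter_odd_hammingNorm {M : Type*} [AddCommGroup M] [Module (ZMod 2) M]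
    (s : Finset (ι → α)) (f : (ι → α) → M) :
    ∑ r ∈ s with Odd (hammingNorm r), f r = ∑ i, ∑ r ∈ s with r i ≠ 0, f r := by
  calc ∑ r ∈ s with Odd (hammingNorm r), f r
      = ∑ r ∈ s, (hammingNorm r : ZMod 2) • f r := by
        rw [Finset.sum_filter]
        refine Finset.sum_congr rfl fun r _ => ?_
        rcases Nat.even_or_odd (hammingNorm r) with h | h
        · simp [(ZMod.natCast_eq_zero_iff_even).2 h, Nat.not_odd_iff_even.2 h]
        · simp [(ZMod.natCast_eq_one_iff_odd).2 h, h]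
    _ = ∑ r ∈ s, ∑ i, (if r i ≠ 0 then 1 else 0 : ZMod 2) • f r := by
        simp only [hammingNorm, Finset.natCast_card_filter, Finset.sum_smul]
    _ = ∑ i, ∑ r ∈ s with r i ≠ 0, f r := by
        rw [Finset.sum_comm]
        simp only [ite_smul, one_smul, zero_smul, Finset.sum_filter]

end Hamming

theorem sum_filter_even_eq_sum_add_sum_filter_odd {β M : Type*} [AddCommGroup M]
    [Module (ZMod 2) M] (s : Finset β) (n : β → ℕ) (f : β → M) :
    ∑ x ∈ s with Even (n x), f x = ∑ x ∈ s, f x + ∑ x ∈ s with Odd (n x), f x := by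
  rw [← Finset.sum_filter_add_sum_filter_not s fun x => Even (n x)]
  simp only [Nat.not_even_iff_odd, add_assoc, ZModModule.add_self, add_zero]

theorem eq_of_two_pow_mul_three_pow_eq {a b c d : ℕ} (h : 2 ^ a * 3 ^ b = 2 ^ c * 3 ^ d) :
    a = c := by
  have := congrArg (·.factorization 2) h
  simpa [Nat.factorization_mul, Nat.Prime.factorization_pow, Nat.prime_two.factorization_self,
    Nat.factorization_eq_zero_of_not_dvd] using this

theorem sum_A3_apply (y : ZMod 3) : ∑ x, A3 x y = if y = 0 then 1 else 0 := by
  revert y; decide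

theorem sum_erase_zero_A3_apply (y : ZMod 3) :
    ∑ x ∈ univ.erase 0, A3 x y = if y ≠ 0 then 1 else 0 := by
  revert y; decide

theorem hammingNorm_A3 (x : ZMod 3) : hammingNorm (A3 x) = if x = 0 then 3 else 2 := by
  revert x; decide

theorem hammingNorm_A3pow (m : ℕ) (r : Fin m → ZMod 3) :
    hammingNorm (A3pow m r) = 2 ^ hammingNorm r * 3 ^ (m - hammingNorm r) := by
  change hammingNorm (fun c : Fin m → ZMod 3 => ∏ i, A3 (r i) (c i)) = _
  rw [hammingNorm_fun_prod]
  simp only [hammingNorm_A3, prod_ite, prod_const, card_filter_eq_zero_eq_card_sub_hammingNorm,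
    Fintype.card_fin]
  exact mul_comm _ _

open scoped Classical in
theorem filter_exists_hammingNorm_A3pow_eq (m : ℕ) (P : ℕ → Prop) [DecidablePred P] :
    ({r | ∃ w, P w ∧ hammingNorm (A3pow m r) = 2 ^ w * 3 ^ (m - w)} : Finset (Fin m → ZMod 3)) =
      ({r | P (hammingNorm r)} : Finset (Fin m → ZMod 3)) := by
  refine Finset.filter_congr fun r _ => ⟨?_, fun h => ⟨_, h, hammingNorm_A3pow m r⟩⟩
  rintro ⟨w, hw, hrow⟩
  rw [hammingNorm_A3pow] at hrow
  rwa [eq_of_two_pow_mul_three_pow_eq hrow]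

theorem sum_A3pow (m : ℕ) : ∑ r, A3pow m r = fun c => if c = 0 then 1 else 0 := by
  funext c
  refine (Finset.sum_apply c _ _).trans ?_
  simp only [A3pow]
  rw [← Fintype.prod_sum (fun i a => A3 a (c i))]
  simp only [sum_A3_apply, prod_boole, funext_iff, Pi.zero_apply, mem_univ, true_implies]

theorem sum_filter_ne_zero_A3pow_apply (m : ℕ) (i : Fin m) (c : Fin m → ZMod 3) :
    ∑ r with r i ≠ 0, A3pow m r c = if ∀ j, c j ≠ 0 ↔ j = i then 1 else 0 := by
  have hrows : ({r | r i ≠ 0} : Finset (Fin m → ZMod 3)) =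
      Fintype.piFinset (Function.update (fun _ => univ) i (univ.erase 0)) := by
    rw [Fintype.piFinset_update_eq_filter_piFinset_mem _ _ (subset_univ _)]
    simp
  calc ∑ r with r i ≠ 0, A3pow m r c
      = ∏ j, ∑ a ∈ Function.update (fun _ => univ) i (univ.erase 0) j, A3 a (c j) := by
        rw [hrows, prod_univ_sum]
        rfl
    _ = ∏ j, if c j ≠ 0 ↔ j = i then 1 else 0 := by
        refine prod_congr rfl fun j _ => ?_
        by_cases hj : j = i
        · subst hj
          rw [Function.update_self, sum_erase_zero_A3_apply]
          simp
        · simp [hj, sum_A3_apply]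
    _ = if ∀ j, c j ≠ 0 ↔ j = i then 1 else 0 := by
        simp only [prod_boole, mem_univ, true_implies]

theorem sum_odd_rows_A3pow (m : ℕ) :
    ∑ r with Odd (hammingNorm r), A3pow m r = fun c => if hammingNorm c = 1 then 1 else 0 := by
  funext c
  refine (Finset.sum_apply c _ _).trans ?_
  rw [sum_filter_odd_hammingNorm]
  simp only [sum_filter_ne_zero_A3pow_apply]
  -- the two sides differ only in their `Decidable` instances
  convert sum_boole_support_eq_singleton (R := F2) c

theorem sum_even_rows_A3pow (m : ℕ) :
    ∑ r with Even (hammingNorm r), A3pow m r = fun c => if hammingNorm c ≤ 1 then 1 else 0 := by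
  refine (sum_filter_even_eq_sum_add_sum_filter_odd _ _ _).trans ?_
  rw [sum_odd_rows_A3pow, sum_A3pow]
  funext c
  rw [Pi.add_apply]
  by_cases hc : c = 0
  · simp [hc]
  · simp [hc, Nat.le_one_iff_eq_zero_or_eq_one, hammingNorm_eq_zero]

open scoped Classical in
theorem sum_even_odd_rows_weight_general (m : ℕ) :
    hammingNorm (∑ r ∈ Finset.univ.filter (fun r : Fin m → ZMod 3 =>
        ∃ w, Even w ∧ hammingNorm (A3pow m r) = 2^w * 3^(m-w)), A3pow m r) = 2*m + 1 ∧
    hammingNorm (∑ r ∈ Finset.univ.filter (fun r : Fin m → ZMod 3 =>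
        ∃ w, Odd w ∧ hammingNorm (A3pow m r) = 2^w * 3^(m-w)), A3pow m r) = 2*m := by
  rw [filter_exists_hammingNorm_A3pow_eq, filter_exists_hammingNorm_A3pow_eq, sum_even_rows_A3pow, sum_odd_rows_A3pow,
    hammingNorm_indicator, hammingNorm_indicator, card_hammingNorm_le_one,
    card_hammingNorm_eq_one]
  simp [mul_comm]

open scoped Classical in
/-- The sum over `F2` of all rows of `A3pow m` of weight `2^w·3^(m-w)` with `w` even has
Hamming weight `2m+1`, and with `w` odd has Hamming weight `2m`, for all `m ≥ 1`. -/
theorem sum_even_odd_rows_weight (m : ℕ) (hm : 1 ≤ m) :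
    hammingNorm (∑ r ∈ Finset.univ.filter (fun r : Fin m → ZMod 3 =>
        ∃ w, Even w ∧ hammingNorm (A3pow m r) = 2^w * 3^(m-w)), A3pow m r) = 2*m + 1 ∧
    hammingNorm (∑ r ∈ Finset.univ.filter (fun r : Fin m → ZMod 3 =>
        ∃ w, Odd w ∧ hammingNorm (A3pow m r) = 2^w * 3^(m-w)), A3pow m r) = 2*m :=
  sum_even_odd_rows_weight_general m
end
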